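/- Let g : ℝ² → ℝ be smooth. Then g satisfies ∂⁴g/∂x₁²∂x₂² = 0 and ∂⁴g/∂x₁⁴ + ∂⁴g/∂x₂⁴ = 0 identically on ℝ² if and only if there exist smooth functions f₁, f₂, f₃, f₄ : ℝ → ℝ such that g(x₁,x₂) = f₁(x₁) + x₂ f₂(x₁) + f₃(x₂) + x₁ f₄(x₂) for all (x₁,x₂) ∈ ℝ², and f₃''''(x₂) + x₁ f₄''''(x₂) + f₁''''(x₁) + x₂ f₂''''(x₁) = 0 for all (x₁,x₂) ∈ ℝ². (This is the form of the in-plane function g in the universal displacements of the tetragonal strain-gradient class 𝔻₄ ⊕ ℤ₂ᶜ and of the fields g_i in the cubic class 𝕆 ⊕ ℤ₂ᶜ and the tetrahedral class 𝕆⁻.) -/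

import Mathlib

/-- Partial derivative of a scalar field on `ℝ²` in the `j`-th coordinate direction. -/
noncomputable def pd2 (j : Fin 2) (f : (Fin 2 → ℝ) → ℝ) : (Fin 2 → ℝ) → ℝ :=
  fun x => fderiv ℝ f x (Pi.single j 1)

namespace D4aux

noncomputable def G4 (a b c d : ℝ → ℝ) : (Fin 2 → ℝ) → ℝ :=
  fun p => a (p 0) + p 1 * b (p 0) + c (p 1) + p 0 * d (p 1)

lemma contDiff_apply2 (i : Fin 2) : ContDiff ℝ (⊤ : ℕ∞) (fun p : Fin 2 → ℝ => p i) :=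
  (ContinuousLinearMap.proj i : (Fin 2 → ℝ) →L[ℝ] ℝ).contDiff

lemma cd_deriv {f : ℝ → ℝ} (hf : ContDiff ℝ (⊤ : ℕ∞) f) : ContDiff ℝ (⊤ : ℕ∞) (deriv f) :=
  (contDiff_infty_iff_deriv.mp hf).2

lemma G4_contDiff {a b c d : ℝ → ℝ} (ha : ContDiff ℝ (⊤ : ℕ∞) a) (hb : ContDiff ℝ (⊤ : ℕ∞) b)
    (hc : ContDiff ℝ (⊤ : ℕ∞) c) (hd : ContDiff ℝ (⊤ : ℕ∞) d) :
    ContDiff ℝ (⊤ : ℕ∞) (G4 a b c d) := by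
  unfold G4
  exact (((ha.comp (contDiff_apply2 0)).add
    ((contDiff_apply2 1).mul (hb.comp (contDiff_apply2 0)))).add
    (hc.comp (contDiff_apply2 1))).add ((contDiff_apply2 0).mul (hd.comp (contDiff_apply2 1)))

lemma pd2_contDiff {f : (Fin 2 → ℝ) → ℝ} (hf : ContDiff ℝ (⊤ : ℕ∞) f) (j : Fin 2) :
    ContDiff ℝ (⊤ : ℕ∞) (pd2 j f) := by
  have h1 : ContDiff ℝ (⊤ : ℕ∞) (fderiv ℝ f) := hf.fderiv_right (by exact_mod_cast le_top)
  exact (ContinuousLinearMap.apply ℝ ℝ (Pi.single j 1 : Fin 2 → ℝ)).contDiff.comp h1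

lemma hasDerivAt_update (f : (Fin 2 → ℝ) → ℝ) {p : Fin 2 → ℝ} (j : Fin 2) (t : ℝ)
    (hf : DifferentiableAt ℝ f (Function.update p j t)) :
    HasDerivAt (fun s => f (Function.update p j s)) (pd2 j f (Function.update p j t)) t := by
  have hγ : ∀ s : ℝ, Function.update p j s
      = (p - p j • (Pi.single j 1 : Fin 2 → ℝ)) + s • (Pi.single j 1 : Fin 2 → ℝ) := by
    intro s; funext i
    by_cases h : i = j
    · subst h; simp
    · simp [Function.update_of_ne h, Pi.single_eq_of_ne h]
  have hc : HasDerivAt (fun s : ℝ => (p - p j • (Pi.single j 1 : Fin 2 → ℝ)) + s • (Pi.single j 1 : Fin 2 → ℝ))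
      (Pi.single j 1 : Fin 2 → ℝ) t := by
    simpa using ((hasDerivAt_id t).smul_const (Pi.single j 1 : Fin 2 → ℝ)).const_add
      (p - p j • (Pi.single j 1 : Fin 2 → ℝ))
  simp only [hγ] at hf ⊢
  exact hf.hasFDerivAt.comp_hasDerivAt t hc

lemma pd2_eq_of_hasDerivAt {f : (Fin 2 → ℝ) → ℝ} (hf : Differentiable ℝ f) (j : Fin 2)
    (p : Fin 2 → ℝ) {D : ℝ}
    (h : HasDerivAt (fun s => f (Function.update p j s)) D (p j)) : pd2 j f p = D := by
  have h2 := hasDerivAt_update f (p := p) j (p j) (hf _)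
  rw [Function.update_eq_self] at h2
  exact h2.unique h

end D4aux

namespace D4aux

lemma one_ne_zero' : (1 : Fin 2) ≠ 0 := by decide
lemma zero_ne_one' : (0 : Fin 2) ≠ 1 := by decide

lemma pd2_0_G4 {a b c d : ℝ → ℝ} (ha : ContDiff ℝ (⊤ : ℕ∞) a) (hb : ContDiff ℝ (⊤ : ℕ∞) b)
    (hc : ContDiff ℝ (⊤ : ℕ∞) c) (hd : ContDiff ℝ (⊤ : ℕ∞) d) :
    pd2 0 (G4 a b c d) = G4 (deriv a) (deriv b) d (fun _ => 0) := by
  funext p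
  apply pd2_eq_of_hasDerivAt ((G4_contDiff ha hb hc hd).differentiable (by simp))
  have hslice : (fun s => G4 a b c d (Function.update p 0 s))
      = fun s => a s + p 1 * b s + c (p 1) + s * d (p 1) := by
    funext s
    simp [G4, Function.update_of_ne one_ne_zero']
  rw [hslice]
  have H : HasDerivAt (fun s => a s + p 1 * b s + c (p 1) + s * d (p 1))
      (deriv a (p 0) + p 1 * deriv b (p 0) + 0 + d (p 1)) (p 0) := by
    refine HasDerivAt.add (HasDerivAt.add (HasDerivAt.add ?_ ?_) (hasDerivAt_const _ _)) ?_
    · exact (ha.differentiable (by simp) (p 0)).hasDerivAt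
    · exact ((hb.differentiable (by simp) (p 0)).hasDerivAt).const_mul (p 1)
    · simpa using (hasDerivAt_id (p 0)).mul_const (d (p 1))
  convert H using 1
  simp [G4]

lemma pd2_1_G4 {a b c d : ℝ → ℝ} (ha : ContDiff ℝ (⊤ : ℕ∞) a) (hb : ContDiff ℝ (⊤ : ℕ∞) b)
    (hc : ContDiff ℝ (⊤ : ℕ∞) c) (hd : ContDiff ℝ (⊤ : ℕ∞) d) :
    pd2 1 (G4 a b c d) = G4 b (fun _ => 0) (deriv c) (deriv d) := by
  funext p
  apply pd2_eq_of_hasDerivAt ((G4_contDiff ha hb hc hd).differentiable (by simp))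
  have hslice : (fun s => G4 a b c d (Function.update p 1 s))
      = fun s => a (p 0) + s * b (p 0) + c s + p 0 * d s := by
    funext s
    simp [G4, Function.update_of_ne zero_ne_one']
  rw [hslice]
  have H : HasDerivAt (fun s => a (p 0) + s * b (p 0) + c s + p 0 * d s)
      (0 + b (p 0) + deriv c (p 1) + p 0 * deriv d (p 1)) (p 1) := by
    refine HasDerivAt.add (HasDerivAt.add (HasDerivAt.add (hasDerivAt_const _ _) ?_) ?_) ?_
    · simpa using (hasDerivAt_id (p 1)).mul_const (b (p 0))
    · exact (hc.differentiable (by simp) (p 1)).hasDerivAt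
    · exact ((hd.differentiable (by simp) (p 1)).hasDerivAt).const_mul (p 0)
  convert H using 1
  simp [G4]

lemma deriv_zero_fun : deriv (fun _ : ℝ => (0 : ℝ)) = fun _ => 0 := by
  funext x; simp

lemma pd2_comm {f : (Fin 2 → ℝ) → ℝ} (hf : ContDiff ℝ (⊤ : ℕ∞) f) (i j : Fin 2)
    (p : Fin 2 → ℝ) : pd2 i (pd2 j f) p = pd2 j (pd2 i f) p := by
  have hsym : IsSymmSndFDerivAt ℝ f p :=
    hf.contDiffAt.isSymmSndFDerivAt (by
      rw [minSmoothness_of_isRCLikeNormedField]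
      rw [show ((2:WithTop ℕ∞)) = ((2:ℕ∞) : WithTop ℕ∞) by rfl]
      exact_mod_cast (le_top : (2:ℕ∞) ≤ ⊤))
  have hdf : DifferentiableAt ℝ (fderiv ℝ f) p :=
    ((hf.fderiv_right (m := (⊤:ℕ∞)) (by exact_mod_cast le_top)).differentiable (by simp)) p
  have key : ∀ k l : Fin 2, pd2 k (pd2 l f) p
      = fderiv ℝ (fderiv ℝ f) p (Pi.single k 1) (Pi.single l 1) := by
    intro k l
    have heq : pd2 l f = fun x => (fderiv ℝ f x) ((fun _ => (Pi.single l 1 : Fin 2 → ℝ)) x) := rfl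
    rw [pd2, heq, fderiv_clm_apply hdf (differentiableAt_const _)]
    simp
  rw [key, key, hsym]

lemma affine_of_deriv2 {h : ℝ → ℝ} (hd : Differentiable ℝ h) (hd' : Differentiable ℝ (deriv h))
    (h2 : ∀ t, deriv (deriv h) t = 0) (t : ℝ) : h t = h 0 + t * deriv h 0 := by
  have hc : ∀ s, deriv h s = deriv h 0 := fun s => is_const_of_deriv_eq_zero hd' h2 s 0
  have hH : ∀ s, HasDerivAt (fun u => h u - u * deriv h 0) 0 s := by
    intro s
    have := (hd s).hasDerivAt.sub ((hasDerivAt_id s).mul_const (deriv h 0))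
    simp only [hc s, one_mul, sub_self] at this; exact this
  have := is_const_of_deriv_eq_zero (fun s => (hH s).differentiableAt)
    (fun s => (hH s).deriv) t 0
  simp at this
  linarith

end D4aux

namespace D4aux

lemma update_vec0 (x y t : ℝ) : Function.update ![x, y] 0 t = ![t, y] := by
  funext i; fin_cases i
  · simp
  · simp [Function.update_of_ne one_ne_zero']

lemma update_vec1 (x y t : ℝ) : Function.update ![x, y] 1 t = ![x, t] := by
  funext i; fin_cases i
  · simp [Function.update_of_ne zero_ne_one']
  · simp

lemma hasDerivAt_fst {f : (Fin 2 → ℝ) → ℝ} (hf : Differentiable ℝ f) (x y : ℝ) :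
    HasDerivAt (fun t => f ![t, y]) (pd2 0 f ![x, y]) x := by
  have := hasDerivAt_update f (p := ![x, y]) 0 x (hf _)
  simp only [update_vec0] at this
  simpa using this

lemma hasDerivAt_snd {f : (Fin 2 → ℝ) → ℝ} (hf : Differentiable ℝ f) (x y : ℝ) :
    HasDerivAt (fun t => f ![x, t]) (pd2 1 f ![x, y]) y := by
  have := hasDerivAt_update f (p := ![x, y]) 1 y (hf _)
  simp only [update_vec1] at this
  simpa using this

lemma eta_vec (p : Fin 2 → ℝ) : ![p 0, p 1] = p := by
  funext i; fin_cases i <;> simp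

lemma contDiff_line0 : ContDiff ℝ (⊤ : ℕ∞) (fun x : ℝ => ![x, (0:ℝ)]) := by
  apply contDiff_pi.mpr
  intro i; fin_cases i
  · simp; exact contDiff_id
  · simpa using contDiff_const (c := (0:ℝ))

lemma contDiff_line1 : ContDiff ℝ (⊤ : ℕ∞) (fun y : ℝ => ![(0:ℝ), y]) := by
  apply contDiff_pi.mpr
  intro i; fin_cases i
  · simpa using contDiff_const (c := (0:ℝ))
  · simp; exact contDiff_id

end D4aux

namespace D4aux

lemma G4_calc {a b c d : ℝ → ℝ} (ha : ContDiff ℝ (⊤ : ℕ∞) a) (hb : ContDiff ℝ (⊤ : ℕ∞) b)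
    (hc : ContDiff ℝ (⊤ : ℕ∞) c) (hd : ContDiff ℝ (⊤ : ℕ∞) d) :
    (∀ p, pd2 0 (pd2 0 (pd2 1 (pd2 1 (G4 a b c d)))) p = 0) ∧
    (∀ p, pd2 0 (pd2 0 (pd2 0 (pd2 0 (G4 a b c d)))) p
        + pd2 1 (pd2 1 (pd2 1 (pd2 1 (G4 a b c d)))) p
      = deriv (deriv (deriv (deriv a))) (p 0) + p 1 * deriv (deriv (deriv (deriv b))) (p 0)
        + deriv (deriv (deriv (deriv c))) (p 1) + p 0 * deriv (deriv (deriv (deriv d))) (p 1)) := by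
  have hz : ContDiff ℝ (⊤ : ℕ∞) (fun _ : ℝ => (0:ℝ)) := contDiff_const
  have ha1 := cd_deriv ha; have ha2 := cd_deriv ha1; have ha3 := cd_deriv ha2
  have hb1 := cd_deriv hb; have hb2 := cd_deriv hb1; have hb3 := cd_deriv hb2
  have hc1 := cd_deriv hc; have hc2 := cd_deriv hc1; have hc3 := cd_deriv hc2
  have hd1 := cd_deriv hd; have hd2 := cd_deriv hd1; have hd3 := cd_deriv hd2
  have e1 : pd2 1 (G4 a b c d) = G4 b (fun _ => 0) (deriv c) (deriv d) := pd2_1_G4 ha hb hc hd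
  have e2 : pd2 1 (pd2 1 (G4 a b c d))
      = G4 (fun _ => 0) (fun _ => 0) (deriv (deriv c)) (deriv (deriv d)) := by
    rw [e1, pd2_1_G4 hb hz hc1 hd1]
  have e3 : pd2 0 (pd2 1 (pd2 1 (G4 a b c d)))
      = G4 (fun _ => 0) (fun _ => 0) (deriv (deriv d)) (fun _ => 0) := by
    rw [e2, pd2_0_G4 hz hz hc2 hd2, deriv_zero_fun]
  have e4 : pd2 0 (pd2 0 (pd2 1 (pd2 1 (G4 a b c d))))
      = G4 (fun _ => 0) (fun _ => 0) (fun _ => 0) (fun _ => 0) := by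
    rw [e3, pd2_0_G4 hz hz hd2 hz, deriv_zero_fun]
  have u1 : pd2 0 (G4 a b c d) = G4 (deriv a) (deriv b) d (fun _ => 0) := pd2_0_G4 ha hb hc hd
  have u2 : pd2 0 (pd2 0 (G4 a b c d))
      = G4 (deriv (deriv a)) (deriv (deriv b)) (fun _ => 0) (fun _ => 0) := by
    rw [u1, pd2_0_G4 ha1 hb1 hd hz]
  have u3 : pd2 0 (pd2 0 (pd2 0 (G4 a b c d)))
      = G4 (deriv (deriv (deriv a))) (deriv (deriv (deriv b))) (fun _ => 0) (fun _ => 0) := by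
    rw [u2, pd2_0_G4 ha2 hb2 hz hz]
  have u4 : pd2 0 (pd2 0 (pd2 0 (pd2 0 (G4 a b c d))))
      = G4 (deriv (deriv (deriv (deriv a)))) (deriv (deriv (deriv (deriv b))))
          (fun _ => 0) (fun _ => 0) := by
    rw [u3, pd2_0_G4 ha3 hb3 hz hz]
  have v3 : pd2 1 (pd2 1 (pd2 1 (G4 a b c d)))
      = G4 (fun _ => 0) (fun _ => 0) (deriv (deriv (deriv c))) (deriv (deriv (deriv d))) := by
    rw [e2, pd2_1_G4 hz hz hc2 hd2]
  have v4 : pd2 1 (pd2 1 (pd2 1 (pd2 1 (G4 a b c d))))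
      = G4 (fun _ => 0) (fun _ => 0) (deriv (deriv (deriv (deriv c))))
          (deriv (deriv (deriv (deriv d)))) := by
    rw [v3, pd2_1_G4 hz hz hc3 hd3]
  constructor
  · intro p; rw [e4]; simp [G4]
  · intro p; rw [u4, v4]; simp only [G4]; ring

end D4aux


open D4aux

/-- A smooth function `g : ℝ² → ℝ` satisfies `∂⁴g/∂x₁²∂x₂² = 0` and
`∂⁴g/∂x₁⁴ + ∂⁴g/∂x₂⁴ = 0` identically if and only if
`g = f₁(x₁) + x₂f₂(x₁) + f₃(x₂) + x₁f₄(x₂)` for smooth `f₁,…,f₄` satisfying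
`f₃''''(x₂) + x₁f₄''''(x₂) + f₁''''(x₁) + x₂f₂''''(x₁) = 0` for all `x₁, x₂`. -/
theorem D4_plus_center_g_form
    (g : (Fin 2 → ℝ) → ℝ) (hg : ContDiff ℝ (⊤ : ℕ∞) g) :
    ((∀ p, pd2 0 (pd2 0 (pd2 1 (pd2 1 g))) p = 0) ∧
     (∀ p, pd2 0 (pd2 0 (pd2 0 (pd2 0 g))) p + pd2 1 (pd2 1 (pd2 1 (pd2 1 g))) p = 0)) ↔
    ∃ f₁ f₂ f₃ f₄ : ℝ → ℝ,
      ContDiff ℝ (⊤ : ℕ∞) f₁ ∧ ContDiff ℝ (⊤ : ℕ∞) f₂ ∧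
      ContDiff ℝ (⊤ : ℕ∞) f₃ ∧ ContDiff ℝ (⊤ : ℕ∞) f₄ ∧
      (∀ p : Fin 2 → ℝ, g p = f₁ (p 0) + p 1 * f₂ (p 0) + f₃ (p 1) + p 0 * f₄ (p 1)) ∧
      (∀ x₁ x₂ : ℝ,
        deriv (deriv (deriv (deriv f₃))) x₂ + x₁ * deriv (deriv (deriv (deriv f₄))) x₂
          + deriv (deriv (deriv (deriv f₁))) x₁
          + x₂ * deriv (deriv (deriv (deriv f₂))) x₁ = 0) := by
  constructor
  · rintro ⟨h1, h2⟩
    have hgd : Differentiable ℝ g := hg.differentiable (by simp)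
    have hD1 : ContDiff ℝ (⊤ : ℕ∞) (pd2 1 g) := pd2_contDiff hg 1
    have hD0 : ContDiff ℝ (⊤ : ℕ∞) (pd2 0 g) := pd2_contDiff hg 0
    have hh : ContDiff ℝ (⊤ : ℕ∞) (pd2 1 (pd2 1 g)) := pd2_contDiff hD1 1
    have hh0 : ContDiff ℝ (⊤ : ℕ∞) (pd2 0 (pd2 1 (pd2 1 g))) := pd2_contDiff hh 0
    have hD10 : ContDiff ℝ (⊤ : ℕ∞) (pd2 1 (pd2 0 g)) := pd2_contDiff hD0 1
    -- the function pd2 1 (pd2 1 g) is affine in the first variable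
    have haff : ∀ x y : ℝ, pd2 1 (pd2 1 g) ![x, y]
        = pd2 1 (pd2 1 g) ![0, y] + x * pd2 0 (pd2 1 (pd2 1 g)) ![0, y] := by
      intro x y
      have hq : ∀ t : ℝ, HasDerivAt (fun s => pd2 1 (pd2 1 g) ![s, y])
          (pd2 0 (pd2 1 (pd2 1 g)) ![t, y]) t :=
        fun t => hasDerivAt_fst (hh.differentiable (by simp)) t y
      have hq' : deriv (fun s => pd2 1 (pd2 1 g) ![s, y])
          = fun t => pd2 0 (pd2 1 (pd2 1 g)) ![t, y] := funext fun t => (hq t).deriv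
      have hq2 : ∀ t : ℝ, HasDerivAt (fun s => pd2 0 (pd2 1 (pd2 1 g)) ![s, y])
          (pd2 0 (pd2 0 (pd2 1 (pd2 1 g))) ![t, y]) t :=
        fun t => hasDerivAt_fst (hh0.differentiable (by simp)) t y
      have := affine_of_deriv2 (h := fun s => pd2 1 (pd2 1 g) ![s, y])
        (fun t => (hq t).differentiableAt)
        (by rw [hq']; exact fun t => (hq2 t).differentiableAt)
        (by intro t; rw [hq', (hq2 t).deriv]; exact h1 ![t, y]) x
      rw [hq'] at this
      exact this
    -- commuting partial derivatives
    have hcomm : ∀ q, pd2 1 (pd2 1 (pd2 0 g)) q = pd2 0 (pd2 1 (pd2 1 g)) q := by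
      intro q
      have c1 : pd2 1 (pd2 0 g) = pd2 0 (pd2 1 g) := funext fun r => pd2_comm hg 1 0 r
      rw [c1]
      exact pd2_comm hD1 1 0 q
    set C2 : ℝ := pd2 1 g ![0, 0] with hC2
    set C4 : ℝ := pd2 1 (pd2 0 g) ![0, 0] with hC4
    set f₁ : ℝ → ℝ := fun x => g ![x, 0] with hf₁def
    set f₂ : ℝ → ℝ := fun x => pd2 1 g ![x, 0] with hf₂def
    set f₃ : ℝ → ℝ := fun y => g ![0, y] - g ![0, 0] - y * C2 with hf₃def
    set f₄ : ℝ → ℝ := fun y => pd2 0 g ![0, y] - pd2 0 g ![0, 0] - y * C4 with hf₄def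
    have hsf₁ : ContDiff ℝ (⊤ : ℕ∞) f₁ := hg.comp contDiff_line0
    have hsf₂ : ContDiff ℝ (⊤ : ℕ∞) f₂ := hD1.comp contDiff_line0
    have hsf₃ : ContDiff ℝ (⊤ : ℕ∞) f₃ :=
      ((hg.comp contDiff_line1).sub contDiff_const).sub (contDiff_id.mul contDiff_const)
    have hsf₄ : ContDiff ℝ (⊤ : ℕ∞) f₄ :=
      ((hD0.comp contDiff_line1).sub contDiff_const).sub (contDiff_id.mul contDiff_const)
    -- first and second derivatives of f₃ and f₄
    have hf₃' : ∀ y : ℝ, HasDerivAt f₃ (pd2 1 g ![0, y] - C2) y := by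
      intro y
      have := ((hasDerivAt_snd hgd 0 y).sub_const (g ![0, 0])).sub
        ((hasDerivAt_id y).mul_const C2)
      simp only [one_mul] at this; exact this
    have hf₄' : ∀ y : ℝ, HasDerivAt f₄ (pd2 1 (pd2 0 g) ![0, y] - C4) y := by
      intro y
      have := ((hasDerivAt_snd (hD0.differentiable (by simp)) 0 y).sub_const
        (pd2 0 g ![0, 0])).sub ((hasDerivAt_id y).mul_const C4)
      simp only [one_mul] at this; exact this
    have hdf₃ : deriv f₃ = fun y => pd2 1 g ![0, y] - C2 := funext fun y => (hf₃' y).deriv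
    have hdf₄ : deriv f₄ = fun y => pd2 1 (pd2 0 g) ![0, y] - C4 := funext fun y => (hf₄' y).deriv
    have hf₃'' : ∀ y : ℝ, HasDerivAt (deriv f₃) (pd2 1 (pd2 1 g) ![0, y]) y := by
      rw [hdf₃]
      exact fun y => (hasDerivAt_snd (hD1.differentiable (by simp)) 0 y).sub_const C2
    have hf₄'' : ∀ y : ℝ, HasDerivAt (deriv f₄) (pd2 0 (pd2 1 (pd2 1 g)) ![0, y]) y := by
      rw [hdf₄]
      intro y
      have := (hasDerivAt_snd (hD10.differentiable (by simp)) 0 y).sub_const C4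
      rwa [hcomm ![0, y]] at this
    -- the representation, pointwise
    have hrep : ∀ x y : ℝ, g ![x, y] = f₁ x + y * f₂ x + f₃ y + x * f₄ y := by
      intro x y
      have he' : ∀ t : ℝ, HasDerivAt (fun t => g ![x, t] - (f₁ x + t * f₂ x + f₃ t + x * f₄ t))
          (pd2 1 g ![x, t] - (f₂ x + deriv f₃ t + x * deriv f₄ t)) t := by
        intro t
        have hinner : HasDerivAt (fun t => f₁ x + t * f₂ x + f₃ t + x * f₄ t)
            (f₂ x + deriv f₃ t + x * deriv f₄ t) t := by
          have := (((hasDerivAt_const t (f₁ x)).add ((hasDerivAt_id t).mul_const (f₂ x))).add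
            ((hf₃' t).deriv ▸ (hf₃' t))).add (((hf₄' t).deriv ▸ (hf₄' t)).const_mul x)
          exact this.congr_deriv (by ring)
        exact (hasDerivAt_snd hgd x t).sub hinner
      have hde : deriv (fun t => g ![x, t] - (f₁ x + t * f₂ x + f₃ t + x * f₄ t))
          = fun t => pd2 1 g ![x, t] - (f₂ x + deriv f₃ t + x * deriv f₄ t) :=
        funext fun t => (he' t).deriv
      have he'' : ∀ t : ℝ, HasDerivAt
          (fun t => pd2 1 g ![x, t] - (f₂ x + deriv f₃ t + x * deriv f₄ t))
          (pd2 1 (pd2 1 g) ![x, t] - (0 + pd2 1 (pd2 1 g) ![0, t]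
            + x * pd2 0 (pd2 1 (pd2 1 g)) ![0, t])) t := by
        intro t
        exact (hasDerivAt_snd (hD1.differentiable (by simp)) x t).sub
          (((hasDerivAt_const t (f₂ x)).add (hf₃'' t)).add ((hf₄'' t).const_mul x))
      have key := affine_of_deriv2
        (h := fun t => g ![x, t] - (f₁ x + t * f₂ x + f₃ t + x * f₄ t))
        (fun t => (he' t).differentiableAt)
        (by rw [hde]; exact fun t => (he'' t).differentiableAt)
        (by
          intro t
          rw [hde, (he'' t).deriv, haff x t]
          ring) y
      have hz0 : g ![x, (0:ℝ)] - (f₁ x + 0 * f₂ x + f₃ 0 + x * f₄ 0) = 0 := by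
        simp [hf₁def, hf₃def, hf₄def]
      have hz1 : deriv (fun t => g ![x, t] - (f₁ x + t * f₂ x + f₃ t + x * f₄ t)) 0 = 0 := by
        rw [hde]
        simp only [hdf₃, hdf₄]
        simp [hf₂def, hC2, hC4]
      rw [hz1] at key
      simp only [hz0] at key
      linarith [key]
    have hrep' : ∀ p : Fin 2 → ℝ, g p = f₁ (p 0) + p 1 * f₂ (p 0) + f₃ (p 1) + p 0 * f₄ (p 1) := by
      intro p
      have := hrep (p 0) (p 1)
      rwa [eta_vec p] at this
    refine ⟨f₁, f₂, f₃, f₄, hsf₁, hsf₂, hsf₃, hsf₄, hrep', ?_⟩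
    intro x₁ x₂
    have hgG : g = G4 f₁ f₂ f₃ f₄ := funext fun p => hrep' p
    have hcalc := (G4_calc hsf₁ hsf₂ hsf₃ hsf₄).2 ![x₁, x₂]
    rw [← hgG] at hcalc
    have := h2 ![x₁, x₂]
    rw [hcalc] at this
    simp only [Matrix.cons_val_zero, Matrix.cons_val_one, Matrix.head_cons] at this
    linarith
  · rintro ⟨f₁, f₂, f₃, f₄, hs₁, hs₂, hs₃, hs₄, hrep, hcond⟩
    have hgG : g = G4 f₁ f₂ f₃ f₄ := funext fun p => hrep p
    obtain ⟨hc1, hc2⟩ := G4_calc hs₁ hs₂ hs₃ hs₄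
    constructor
    · intro p; rw [hgG]; exact hc1 p
    · intro p
      rw [hgG, hc2 p]
      have := hcond (p 0) (p 1)
      linarith
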